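/- Over K = ℝ{{t}} (real Puiseux series with the t-adic absolute value) considered with the trivial absolute value on K, the map ||·||^sgn : K² → ℝ defined by ||(x,y)||^sgn = sgn(x) if |x|_t ≥ |y|_t and sgn(y) otherwise, is a signed seminorm with respect to the trivial absolute value, but it is not diagonalizable: there is no ordered basis B of K² and no c_1 ≥ c_2 ≥ 0 with ||·||^sgn = ||·||_{B,c}. -/

import Mathlib

noncomputable section

variable {K : Type*} [Field K] [LinearOrder K] [IsStrictOrderedRing K] {V : Type*} [AddCommGroup V] [Module K V]

/-- The sign of an element of a linear ordered field, as a real number. -/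
def sgn (x : K) : ℝ := if 0 < x then 1 else if x < 0 then -1 else 0

/-- The trivial absolute value. -/
def trivabs (x : K) : ℝ := if x = 0 then 0 else 1

/-- `K` is real closed. -/
def IsRealClosedOrd (K : Type*) [Field K] [LinearOrder K] [IsStrictOrderedRing K] : Prop :=
  (∀ x : K, 0 ≤ x → ∃ y, y * y = x) ∧
  ∀ p : Polynomial K, Odd p.natDegree → ∃ x, p.eval x = 0

/-- A signed seminorm on `V` with respect to the trivial absolute value on `K`
(note `sgn c * trivabs c = sgn c`). -/
def IsSignedSeminormTriv (N : V → ℝ) : Prop :=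
  (∀ (c : K) (v : V), N (c • v) = sgn c * N v) ∧
  (∀ v w : V, min (N v) (N w) ≤ N (v + w) ∧ N (v + w) ≤ max (N v) (N w))

/-- `av` is a non-Archimedean absolute value. -/
def IsNonarch (av : AbsoluteValue K ℝ) : Prop := ∀ x y : K, av (x + y) ≤ max (av x) (av y)

/-- `av` is compatible with the order on `K`. -/
def Compat (av : AbsoluteValue K ℝ) : Prop :=
  (∀ x y : K, 0 ≤ x → x ≤ y → av x ≤ av y) ∧
  (∀ x y : K, av y < av x → sgn (x + y) = sgn x)

/-- `j` is the minimal index at which `a (lam j) * c j` attains its maximum. -/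
def DiagAt {n : ℕ} (a : K → ℝ) (lam : Fin n → K) (c : Fin n → ℝ) (j : Fin n) : Prop :=
  (∀ i, a (lam i) * c i ≤ a (lam j) * c j) ∧
  (∀ i, i < j → a (lam i) * c i < a (lam j) * c j)

/-!
`leadSign av v` is the sign of the `av`-dominant coordinate of `v`. It is odd, vanishes only
at `0`, and its positive set is closed under addition: the dominant coordinate of a sum comes
from a summand of maximal size, and positive elements of equal size add up without
cancellation. A `{-1, 0, 1}`-valued function with these properties is a signed seminorm.

If `leadSign av = ‖·‖_{B,c}`, then `c 0 > 0` and `leadSign av v = sgn (λ₀ v) * c 0` whenever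
the first coordinate `λ₀ v` does not vanish. But `leadSign av` is locally constant around
`B 1` for the `av`-topology, whereas `λ₀ (B 1 ± t • B 0) = ±t` takes both signs for
arbitrarily small `t`.
-/

theorem min_le_and_le_max_of_add_pos {G : Type*} [AddCommGroup G] {s : G → ℝ}
    (hmem : ∀ v, s v = -1 ∨ s v = 0 ∨ s v = 1) (hneg : ∀ v, s (-v) = -s v)
    (hzero : ∀ v, s v = 0 ↔ v = 0) (hadd : ∀ v w, 0 < s v → 0 < s w → 0 < s (v + w))
    (v w : G) : min (s v) (s w) ≤ s (v + w) ∧ s (v + w) ≤ max (s v) (s w) := by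
  have lower : ∀ v w, min (s v) (s w) ≤ s (v + w) := by
    intro v w
    rcases eq_or_ne v 0 with rfl | hv
    · simp
    rcases eq_or_ne w 0 with rfl | hw
    · simp
    have hge : ∀ u, -1 ≤ s u := fun u => by rcases hmem u with h | h | h <;> linarith
    rcases hmem v with h₁ | h₁ | h₁
    · exact (min_le_left _ _).trans (h₁ ▸ hge _)
    · exact absurd ((hzero v).1 h₁) hv
    rcases hmem w with h₂ | h₂ | h₂
    · exact (min_le_right _ _).trans (h₂ ▸ hge _)
    · exact absurd ((hzero w).1 h₂) hw
    have hvw := hadd v w (by linarith) (by linarith)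
    rw [h₁, h₂, min_self]
    rcases hmem (v + w) with h | h | h <;> linarith
  refine ⟨lower v w, ?_⟩
  have := lower (-v) (-w)
  rwa [← neg_add, hneg, hneg, hneg, min_neg_neg, neg_le_neg_iff] at this

section LinearOrder

variable {F : Type*} [Field F] [LinearOrder F]

lemma sgn_eq_sign (x : F) : sgn x = ((SignType.sign x : SignType) : ℝ) := by
  simp only [sgn, sign_apply]
  split_ifs <;> simp

lemma sgn_of_pos {x : F} (h : 0 < x) : sgn x = 1 := by
  simp [sgn, h]

lemma sgn_eq_zero_iff {x : F} : sgn x = 0 ↔ x = 0 := by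
  rcases lt_trichotomy x 0 with h | rfl | h
  · simp [sgn, h, h.not_gt, h.ne]
  · simp [sgn]
  · simp [sgn, h, h.ne']

lemma sgn_pos_iff {x : F} : 0 < sgn x ↔ 0 < x := by
  rcases lt_trichotomy x 0 with h | rfl | h
  · simp [sgn, h, h.not_gt]
  · simp [sgn]
  · simp [sgn, h]

lemma sgn_mem (x : F) : sgn x = -1 ∨ sgn x = 0 ∨ sgn x = 1 := by
  unfold sgn
  split_ifs <;> simp

lemma trivabs_le_one (x : F) : trivabs x ≤ 1 := by
  unfold trivabs
  split_ifs <;> norm_num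

lemma diagAt_trivabs_zero {n : ℕ} {lam : Fin (n + 1) → F} {c : Fin (n + 1) → ℝ}
    (hc : ∀ i, 0 ≤ c i ∧ c i ≤ c 0) (h : lam 0 ≠ 0) : DiagAt trivabs lam c 0 := by
  refine ⟨fun i => ?_, fun i hi => absurd hi (Fin.not_lt_zero i)⟩
  calc trivabs (lam i) * c i ≤ 1 * c i := by gcongr; exacts [(hc i).1, trivabs_le_one _]
    _ ≤ trivabs (lam 0) * c 0 := by simp [trivabs, h, (hc i).2]

def leadSign (av : AbsoluteValue F ℝ) (p : F × F) : ℝ :=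
  if av p.2 ≤ av p.1 then sgn p.1 else sgn p.2

namespace leadSign

variable {av : AbsoluteValue F ℝ} {x y x' y' : F}

lemma of_le (h : av y ≤ av x) : leadSign av (x, y) = sgn x :=
  if_pos h

lemma of_lt (h : av x < av y) : leadSign av (x, y) = sgn y :=
  if_neg h.not_ge

lemma mem (p : F × F) : leadSign av p = -1 ∨ leadSign av p = 0 ∨ leadSign av p = 1 := by
  unfold leadSign
  split_ifs <;> exact sgn_mem _

lemma eq_zero_iff {p : F × F} : leadSign av p = 0 ↔ p = 0 := by
  obtain ⟨x, y⟩ := p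
  rcases le_or_gt (av y) (av x) with h | h
  · rw [of_le h, sgn_eq_zero_iff, Prod.mk_eq_zero, iff_self_and]
    rintro rfl
    simpa using h
  · rw [of_lt h, sgn_eq_zero_iff, Prod.mk_eq_zero, iff_and_self]
    rintro rfl
    simpa using (av.nonneg x).trans_lt h

lemma pos_iff : 0 < leadSign av (x, y) ↔ av y ≤ av x ∧ 0 < x ∨ av x < av y ∧ 0 < y := by
  rcases le_or_gt (av y) (av x) with h | h
  · simp [of_le h, sgn_pos_iff, h, h.not_gt]
  · simp [of_lt h, sgn_pos_iff, h, h.not_ge]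

variable (hna : IsNonarch av) (hcomp : Compat av)
include hna hcomp

lemma add_of_le (h : av y ≤ av x) (hx' : av x' < av x) (hy' : av y' ≤ av x) :
    leadSign av (x + x', y + y') = sgn x := by
  have hx : av (x + x') = av x := IsNonarchimedean.add_eq_left_of_lt (f := av) hna hx'
  rw [of_le (by rw [hx]; exact (hna y y').trans (max_le h hy')), hcomp.2 x x' hx']

lemma add_of_lt (h : av x < av y) (hx' : av x' < av y) (hy' : av y' < av y) :
    leadSign av (x + x', y + y') = sgn y := by
  have hy : av (y + y') = av y := IsNonarchimedean.add_eq_left_of_lt (f := av) hna hy'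
  rw [of_lt (by rw [hy]; exact (hna x x').trans_lt (max_lt h hx')), hcomp.2 y y' hy']

lemma add_pos_of_le_of_lt {x₁ y₁ x₂ y₂ : F} (h₁ : av y₁ ≤ av x₁) (hx₁ : 0 < x₁)
    (h₂ : av x₂ < av y₂) (hy₂ : 0 < y₂) : 0 < leadSign av ((x₁, y₁) + (x₂, y₂)) := by
  rcases le_or_gt (av y₂) (av x₁) with h | h
  · rwa [Prod.mk_add_mk, add_of_le hna hcomp h₁ (h₂.trans_le h) h, sgn_pos_iff]
  · rwa [add_comm, Prod.mk_add_mk, add_of_lt hna hcomp h₂ h (h₁.trans_lt h), sgn_pos_iff]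

lemma add_of_lt_max {p q : F × F} (h₁ : av q.1 < max (av p.1) (av p.2))
    (h₂ : av q.2 < max (av p.1) (av p.2)) : leadSign av (p + q) = leadSign av p := by
  obtain ⟨x, y⟩ := p
  obtain ⟨x', y'⟩ := q
  rcases le_or_gt (av y) (av x) with h | h
  · rw [max_eq_left h] at h₁ h₂
    rw [of_le h, Prod.mk_add_mk, add_of_le hna hcomp h h₁ h₂.le]
  · rw [max_eq_right h.le] at h₁ h₂
    rw [of_lt h, Prod.mk_add_mk, add_of_lt hna hcomp h h₁ h₂]

lemma exists_add_smul_eq (hsmall : ∀ ε : ℝ, 0 < ε → ∃ x : F, x ≠ 0 ∧ av x < ε) {p : F × F}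
    (hp : p ≠ 0) (q : F × F) :
    ∃ t : F, t ≠ 0 ∧ ∀ s : F, av s ≤ av t → leadSign av (p + s • q) = leadSign av p := by
  set M := max (av p.1) (av p.2)
  set C := max (av q.1) (av q.2)
  have hM : 0 < M := by
    by_contra! hM
    have hzero : ∀ z, av z ≤ M → z = 0 :=
      fun z hz => av.eq_zero.1 ((hz.trans hM).antisymm (av.nonneg z))
    exact hp (Prod.ext (hzero _ (le_max_left _ _)) (hzero _ (le_max_right _ _)))
  obtain ⟨t, ht, htM⟩ := hsmall (M / (C + 1)) (by positivity)
  refine ⟨t, ht, fun s hs => add_of_lt_max hna hcomp ?_ ?_⟩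
  all_goals
    calc av (s * _) = av s * av _ := map_mul av _ _
      _ ≤ av t * (C + 1) := by
        gcongr
        linarith [le_max_left (av q.1) (av q.2), le_max_right (av q.1) (av q.2)]
      _ < M := (lt_div_iff₀ (by positivity)).1 htM

end leadSign

end LinearOrder

lemma sgn_mul (x y : K) : sgn (x * y) = sgn x * sgn y := by
  simp [sgn_eq_sign, sign_mul]

lemma sgn_neg (x : K) : sgn (-x) = -sgn x := by
  simp [sgn_eq_sign, Left.sign_neg]

lemma Compat.max_le_map_add {av : AbsoluteValue K ℝ} (hcomp : Compat av) {x y : K} (hx : 0 ≤ x)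
    (hy : 0 ≤ y) : max (av x) (av y) ≤ av (x + y) :=
  max_le (hcomp.1 x _ hx (le_add_of_nonneg_right hy)) (hcomp.1 y _ hy (le_add_of_nonneg_left hx))

namespace leadSign

variable {av : AbsoluteValue K ℝ}

lemma smul (c : K) (p : K × K) : leadSign av (c • p) = sgn c * leadSign av p := by
  rcases eq_or_ne c 0 with rfl | hc
  · simp [leadSign, sgn]
  have hiff : av (c * p.2) ≤ av (c * p.1) ↔ av p.2 ≤ av p.1 := by
    simp only [map_mul]
    exact mul_le_mul_iff_right₀ (av.pos hc)
  simp only [leadSign, Prod.smul_fst, Prod.smul_snd, smul_eq_mul, hiff]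
  split_ifs <;> exact sgn_mul _ _

lemma neg (p : K × K) : leadSign av (-p) = -leadSign av p := by
  simpa [sgn_neg, sgn_of_pos] using smul (av := av) (-1) p

variable (hna : IsNonarch av) (hcomp : Compat av)
include hna hcomp

lemma add_pos {p q : K × K} (hp : 0 < leadSign av p) (hq : 0 < leadSign av q) :
    0 < leadSign av (p + q) := by
  obtain ⟨x₁, y₁⟩ := p
  obtain ⟨x₂, y₂⟩ := q
  rw [pos_iff] at hp hq
  rcases hp with ⟨h₁, hx₁⟩ | ⟨h₁, hy₁⟩ <;> rcases hq with ⟨h₂, hx₂⟩ | ⟨h₂, hy₂⟩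
  · rw [Prod.mk_add_mk, pos_iff]
    exact .inl ⟨(hna y₁ y₂).trans ((max_le_max h₁ h₂).trans (hcomp.max_le_map_add hx₁.le hx₂.le)),
      by positivity⟩
  · exact add_pos_of_le_of_lt hna hcomp h₁ hx₁ h₂ hy₂
  · rw [add_comm]
    exact add_pos_of_le_of_lt hna hcomp h₂ hx₂ h₁ hy₁
  · rw [Prod.mk_add_mk, pos_iff]
    exact .inr ⟨(hna x₁ x₂).trans_lt ((max_lt_max h₁ h₂).trans_le
      (hcomp.max_le_map_add hy₁.le hy₂.le)), by positivity⟩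

theorem isSignedSeminormTriv : IsSignedSeminormTriv (K := K) (leadSign av) :=
  ⟨smul, min_le_and_le_max_of_add_pos mem neg (fun _ => eq_zero_iff)
    (fun _ _ => add_pos hna hcomp)⟩

end leadSign

/-- `N = ‖·‖_{B,c}` for some ordered basis `B` and weights `c 0 ≥ c 1 ≥ 0`. -/
def IsDiagonalizableTriv (N : V → ℝ) : Prop :=
  ∃ (B : Module.Basis (Fin 2) K V) (c : Fin 2 → ℝ), c 1 ≤ c 0 ∧ 0 ≤ c 1 ∧
    ∀ (v : V) (j : Fin 2), DiagAt trivabs (fun i => B.repr v i) c j → N v = sgn (B.repr v j) * c j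

theorem leadSign.not_isDiagonalizableTriv {av : AbsoluteValue K ℝ} (hna : IsNonarch av)
    (hcomp : Compat av) (hsmall : ∀ ε : ℝ, 0 < ε → ∃ x : K, x ≠ 0 ∧ av x < ε) :
    ¬ IsDiagonalizableTriv (K := K) (leadSign av) := by
  rintro ⟨B, c, hc₁₀, hc₁, H⟩
  have hc : ∀ i, 0 ≤ c i ∧ c i ≤ c 0 := Fin.forall_fin_two.2 ⟨⟨hc₁.trans hc₁₀, le_rfl⟩, hc₁, hc₁₀⟩
  have hlead : ∀ v, B.repr v 0 ≠ 0 → leadSign av v = sgn (B.repr v 0) * c 0 :=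
    fun v hv => H v 0 (diagAt_trivabs_zero hc hv)
  have hc₀ : c 0 ≠ 0 := by
    have h := hlead (B 0) (by simp)
    rw [B.repr_self, Finsupp.single_eq_same, sgn_of_pos one_pos, one_mul] at h
    exact h ▸ leadSign.eq_zero_iff.not.2 (B.ne_zero 0)
  -- `sgn` of the first coordinate flips across the line `K • B 1`, `leadSign` does not.
  obtain ⟨t, ht, hconst⟩ := leadSign.exists_add_smul_eq hna hcomp hsmall (B.ne_zero 1) (B 0)
  have hrepr : ∀ s : K, B.repr (B 1 + s • B 0) 0 = s := by simp
  have hpos := hlead (B 1 + t • B 0) (by rwa [hrepr])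
  have hneg := hlead (B 1 + (-t) • B 0) (by rwa [hrepr, neg_ne_zero])
  rw [hconst t le_rfl, hrepr] at hpos
  rw [hconst (-t) (map_neg_eq_map av t).le, hrepr, sgn_neg] at hneg
  have : sgn t * c 0 = 0 := by linarith
  simp [sgn_eq_zero_iff, ht, hc₀] at this

theorem not_diagonalizable_example_general
    (av : AbsoluteValue K ℝ) (hna : IsNonarch av) (hcomp : Compat av)
    (hsmall : ∀ ε : ℝ, 0 < ε → ∃ x : K, x ≠ 0 ∧ av x < ε) :
    IsSignedSeminormTriv (K := K)
      (fun p : K × K => if av p.2 ≤ av p.1 then sgn p.1 else sgn p.2) ∧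
    ¬ ∃ (B : Module.Basis (Fin 2) K (K × K)) (c : Fin 2 → ℝ), c 1 ≤ c 0 ∧ 0 ≤ c 1 ∧
        ∀ (v : K × K) (j : Fin 2), DiagAt trivabs (fun i => B.repr v i) c j →
          (if av v.2 ≤ av v.1 then sgn v.1 else sgn v.2) = sgn (B.repr v j) * c j :=
  ⟨leadSign.isSignedSeminormTriv hna hcomp, leadSign.not_isDiagonalizableTriv hna hcomp hsmall⟩

/-- Over the real closed field of real Puiseux series `K = ℝ{{t}}` — here
axiomatized as a real closed field with a compatible non-Archimedean `t`-adic
absolute value `av` taking nonzero values arbitrarily close to `0` — considered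
with the TRIVIAL absolute value, the map `(x,y) ↦ sgn x` if `av y ≤ av x`, else
`sgn y`, is a signed seminorm which is not diagonalizable. -/
theorem not_diagonalizable_example
    (hK : IsRealClosedOrd K) (av : AbsoluteValue K ℝ) (hna : IsNonarch av) (hcomp : Compat av)
    (hsmall : ∀ ε : ℝ, 0 < ε → ∃ x : K, x ≠ 0 ∧ av x < ε) :
    IsSignedSeminormTriv (K := K)
      (fun p : K × K => if av p.2 ≤ av p.1 then sgn p.1 else sgn p.2) ∧
    ¬ ∃ (B : Module.Basis (Fin 2) K (K × K)) (c : Fin 2 → ℝ), c 1 ≤ c 0 ∧ 0 ≤ c 1 ∧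
        ∀ (v : K × K) (j : Fin 2), DiagAt trivabs (fun i => B.repr v i) c j →
          (if av v.2 ≤ av v.1 then sgn v.1 else sgn v.2) = sgn (B.repr v j) * c j :=
  not_diagonalizable_example_general av hna hcomp hsmall
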